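/- arXiv:2504.19313 — 3 statements merged into one kernel-verified Lean document; each statement's English description precedes it below -/
import Mathlib

section
/- For n, r ∈ ℕ let τ_p := τ_{p,p+1} for 1 ≤ p ≤ r−1, viewed as maps on 𝕀_n^r ∪ {0}. Then for every s ∈ 𝕀_n^r: (a) τ_p(τ_p s) = 0 for all 1 ≤ p ≤ r−1; (b) τ_p(τ_q s) = τ_q(τ_p s) whenever |p−q| ≥ 2; (c) τ_p(τ_{p+1}(τ_p s)) = τ_{p+1}(τ_p(τ_{p+1} s)) for all 1 ≤ p ≤ r−2. (In particular the τ_p satisfy the defining relations of the nil-Hecke algebra NH_r.) -/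
open scoped Classical

/-- An interval `[i,j]` is encoded as the pair `(i,j)` of integers. -/
abbrev Intv := ℤ × ℤ

/-- Membership in `𝕀ₙ`: `0 ≤ j - i ≤ n + 1`. -/
def memI (n : ℕ) (a : Intv) : Prop := 0 ≤ a.2 - a.1 ∧ a.2 - a.1 ≤ (n : ℤ) + 1

/-- The pair `([i₁,j₁],[i₂,j₂])` is connected (for the parameter `n`). -/
def Conn (n : ℕ) (a b : Intv) : Prop :=
  (b.1 < a.1 ∧ a.1 ≤ b.2 ∧ b.2 < a.2 ∧ 0 ≤ a.2 - b.1 ∧ a.2 - b.1 ≤ (n : ℤ) + 1) ∨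
  (a.1 < b.1 ∧ b.1 ≤ a.2 ∧ a.2 < b.2 ∧ 0 ≤ b.2 - a.1 ∧ b.2 - a.1 ≤ (n : ℤ) + 1)

/-- The partial map `τ_{m,ℓ}`, with `none` playing the role of `0`. -/
noncomputable def tau (n : ℕ) {r : ℕ} (m l : Fin r) (s : Fin r → Intv) :
    Option (Fin r → Intv) :=
  if Conn n (s m) (s l) then
    some (Function.update (Function.update s m ((s l).1, (s m).2)) l ((s m).1, (s l).2))
  else none

lemma sq_key (n : ℕ) (a b : Intv) (h : Conn n a b) : ¬ Conn n (b.1, a.2) (a.1, b.2) := by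
  simp only [Conn] at *; omega

lemma braid_key (n : ℕ) (a b c : Intv) (ha : memI n a) (hb : memI n b) (hc : memI n c) :
    (Conn n a b ∧ Conn n (a.1,b.2) c ∧ Conn n (b.1,a.2) (c.1,b.2)) ↔
    (Conn n b c ∧ Conn n a (c.1,b.2) ∧ Conn n (a.1,b.2) (b.1,c.2)) := by
  simp only [Conn, memI] at *; omega

lemma tau_sq (n : ℕ) {r : ℕ} (m l : Fin r) (hml : m ≠ l) (s : Fin r → Intv) :
    (tau n m l s).bind (tau n m l) = none := by
  unfold tau
  by_cases h : Conn n (s m) (s l)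
  · simp [h, Function.update_apply, hml, Ne.symm hml, sq_key n (s m) (s l) h]
  · simp [h]

lemma tau_comm (n : ℕ) {r : ℕ} (m l m' l' : Fin r) (hml : m ≠ l) (hm'l' : m' ≠ l')
    (hmm' : m ≠ m') (hml' : m ≠ l') (hlm' : l ≠ m') (hll' : l ≠ l') (s : Fin r → Intv) :
    (tau n m' l' s).bind (tau n m l) = (tau n m l s).bind (tau n m' l') := by
  unfold tau
  by_cases h1 : Conn n (s m') (s l') <;> by_cases h2 : Conn n (s m) (s l) <;>
    simp [h1, h2, Function.update_apply, hml, hm'l', hmm', hml', hlm', hll',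
      Ne.symm hml, Ne.symm hm'l', Ne.symm hmm', Ne.symm hml', Ne.symm hlm', Ne.symm hll']
  funext x
  simp only [Function.update_apply]
  split_ifs <;> simp_all

lemma tau_braid (n : ℕ) {r : ℕ} (m l k : Fin r) (hml : m ≠ l) (hmk : m ≠ k) (hlk : l ≠ k)
    (s : Fin r → Intv) (ha : memI n (s m)) (hb : memI n (s l)) (hc : memI n (s k)) :
    ((tau n m l s).bind (tau n l k)).bind (tau n m l) =
    ((tau n l k s).bind (tau n m l)).bind (tau n l k) := by
  set F : Fin r → Intv :=
    Function.update (Function.update (Function.update s m ((s k).1, (s m).2)) l (s l))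
      k ((s m).1, (s k).2) with hF
  have L : ((tau n m l s).bind (tau n l k)).bind (tau n m l) =
      if Conn n (s m) (s l) ∧ Conn n ((s m).1,(s l).2) (s k) ∧
         Conn n ((s l).1,(s m).2) ((s k).1,(s l).2) then some F else none := by
    unfold tau
    by_cases h1 : Conn n (s m) (s l)
    · simp only [h1, if_true, Option.bind_some, Function.update_apply, if_neg hlk,
        if_neg (Ne.symm hml), if_pos rfl, if_neg (Ne.symm hmk)]
      by_cases h2 : Conn n ((s m).1, (s l).2) (s k)
      · simp only [h2, if_true, Option.bind_some, Function.update_apply, if_neg hml,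
          if_neg hmk, if_neg hlk, if_pos rfl, if_neg (Ne.symm hml), if_neg (Ne.symm hmk),
          if_neg (Ne.symm hlk), true_and]
        by_cases h3 : Conn n ((s l).1, (s m).2) ((s k).1, (s l).2)
        · simp only [h3, if_true, true_and]
          congr 1
          funext x
          simp only [hF, Function.update_apply]
          split_ifs <;> simp_all
        · simp [h3]
      · simp [h2, hml, hmk, hlk, Ne.symm hml, Ne.symm hmk, Ne.symm hlk, Function.update_apply]
    · simp [h1]
  have R : ((tau n l k s).bind (tau n m l)).bind (tau n l k) =
      if Conn n (s l) (s k) ∧ Conn n (s m) ((s k).1,(s l).2) ∧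
         Conn n ((s m).1,(s l).2) ((s l).1,(s k).2) then some F else none := by
    unfold tau
    by_cases h1 : Conn n (s l) (s k)
    · simp only [h1, if_true, Option.bind_some, Function.update_apply, if_neg hml,
        if_neg hmk, if_pos rfl, if_neg (Ne.symm hlk)]
      by_cases h2 : Conn n (s m) ((s k).1, (s l).2)
      · simp only [h2, if_true, Option.bind_some, Function.update_apply, if_neg hml,
          if_neg hmk, if_neg hlk, if_pos rfl, if_neg (Ne.symm hml), if_neg (Ne.symm hmk),
          if_neg (Ne.symm hlk), true_and]
        by_cases h3 : Conn n ((s m).1, (s l).2) ((s l).1, (s k).2)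
        · simp only [h3, if_true, true_and]
          congr 1
          funext x
          simp only [hF, Function.update_apply]
          split_ifs <;> simp_all
        · simp [h3]
      · simp [h2, hml, hmk, hlk, Ne.symm hml, Ne.symm hmk, Ne.symm hlk, Function.update_apply]
    · simp [h1]
  rw [L, R]
  exact if_congr (braid_key n (s m) (s l) (s k) ha hb hc) rfl rfl

/-- the maps `τ_p := τ_{p,p+1}` satisfy the nil-Hecke relations:
`τ_p² = 0`, `τ_p τ_q = τ_q τ_p` for `|p - q| ≥ 2`, and the braid relation
`τ_p τ_{p+1} τ_p = τ_{p+1} τ_p τ_{p+1}` (indices are 0-based here). -/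
theorem stmt_1 (n r : ℕ) (s : Fin r → Intv) (hI : ∀ t, memI n (s t)) :
    (∀ p : ℕ, (hp : p + 1 < r) →
      (tau n ⟨p, by omega⟩ ⟨p + 1, hp⟩ s).bind (tau n ⟨p, by omega⟩ ⟨p + 1, hp⟩) = none) ∧
    (∀ p q : ℕ, (hp : p + 1 < r) → (hq : q + 1 < r) → (p + 2 ≤ q ∨ q + 2 ≤ p) →
      (tau n ⟨q, by omega⟩ ⟨q + 1, hq⟩ s).bind (tau n ⟨p, by omega⟩ ⟨p + 1, hp⟩) =
        (tau n ⟨p, by omega⟩ ⟨p + 1, hp⟩ s).bind (tau n ⟨q, by omega⟩ ⟨q + 1, hq⟩)) ∧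
    (∀ p : ℕ, (hp : p + 2 < r) →
      ((tau n ⟨p, by omega⟩ ⟨p + 1, by omega⟩ s).bind
          (tau n ⟨p + 1, by omega⟩ ⟨p + 2, hp⟩)).bind
        (tau n ⟨p, by omega⟩ ⟨p + 1, by omega⟩) =
      ((tau n ⟨p + 1, by omega⟩ ⟨p + 2, hp⟩ s).bind
          (tau n ⟨p, by omega⟩ ⟨p + 1, by omega⟩)).bind
        (tau n ⟨p + 1, by omega⟩ ⟨p + 2, hp⟩)) := by
  refine ⟨?_, ?_, ?_⟩
  · intro p hp
    exact tau_sq n _ _ (by simp [Fin.ext_iff]) s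
  · intro p q hp hq hpq
    exact tau_comm n _ _ _ _ (by simp [Fin.ext_iff]) (by simp [Fin.ext_iff])
      (by simp [Fin.ext_iff]; omega) (by simp [Fin.ext_iff]; omega)
      (by simp [Fin.ext_iff]; omega) (by simp [Fin.ext_iff]; omega) s
  · intro p hp
    exact tau_braid n _ _ _ (by simp [Fin.ext_iff]) (by simp [Fin.ext_iff])
      (by simp [Fin.ext_iff]) s (hI _) (hI _) (hI _)
end

section
/- Let [i,j] ∈ 𝕀_n and g ∈ 𝓟_{i,j}. Then every interval [m,ℓ] ∈ 𝓒_g^− satisfies m + ℓ > i + j. -/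
open scoped Classical

/-- `g ∈ 𝓟_{i,j}`: `g(0) = 2j`, `g(r+1) - g(r) = ±1` for `0 ≤ r ≤ n`, and
`g(n+1) = n + 1 + 2i`. -/
def Pset (n : ℕ) (i j : ℤ) (g : ℕ → ℤ) : Prop :=
  g 0 = 2 * j ∧ (∀ r : ℕ, r ≤ n → g (r + 1) - g r = 1 ∨ g (r + 1) - g r = -1) ∧
    g (n + 1) = (n : ℤ) + 1 + 2 * i

/-- for `[i,j] ∈ 𝕀ₙ` and `g ∈ 𝓟_{i,j}`, every interval
`[m,ℓ] = [(g(r)-r)/2, (g(r)+r)/2] ∈ 𝓒_g⁻` (i.e. `1 ≤ r ≤ n` with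
`g(r-1) = g(r) - 1 = g(r+1)`) satisfies `m + ℓ > i + j`. -/
theorem stmt_13 (n : ℕ) (i j : ℤ) (hij : memI n (i, j)) (g : ℕ → ℤ) (hg : Pset n i j g)
    (r : ℕ) (hr1 : 1 ≤ r) (hrn : r ≤ n)
    (h1 : g (r - 1) = g r - 1) (h2 : g (r + 1) = g r - 1)
    (m l : ℤ) (hm : 2 * m = g r - (r : ℤ)) (hl : 2 * l = g r + (r : ℤ)) :
    i + j < m + l := by
  obtain ⟨hg0, hstep, hgn⟩ := hg
  -- Lipschitz bounds: for a ≤ b ≤ n+1, |g b - g a| ≤ b - a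
  have key : ∀ a b : ℕ, a ≤ b → b ≤ n + 1 →
      g a - ((b : ℤ) - a) ≤ g b ∧ g b ≤ g a + ((b : ℤ) - a) := by
    intro a b hab hbn
    induction b with
    | zero =>
      interval_cases a
      simp
    | succ b ih =>
      rcases Nat.lt_or_ge a (b + 1) with hlt | hge
      · have hab' : a ≤ b := Nat.lt_succ_iff.mp hlt
        have ih' := ih hab' (Nat.le_of_succ_le hbn)
        have hs := hstep b (by omega)
        push_cast
        rcases hs with hs | hs <;> constructor <;> push_cast at ih' <;> omega
      · have : a = b + 1 := le_antisymm hab hge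
        subst this
        simp
  have hmr : (1:ℕ) ≤ r := hr1
  have hkey1 := key 0 (r - 1) (Nat.zero_le _) (by omega)
  have hkey2 := key (r + 1) (n + 1) (by omega) le_rfl
  have hcast : ((r - 1 : ℕ) : ℤ) = (r : ℤ) - 1 := by
    omega
  rw [hcast, hg0] at hkey1
  rw [hgn] at hkey2
  have h3 : 2 * j - ((r : ℤ) - 1) ≤ g r - 1 := by
    calc 2 * j - ((r : ℤ) - 1) ≤ g (r - 1) := by
          have := hkey1.1; push_cast at this; omega
    _ = g r - 1 := h1
  have h4 : (n : ℤ) + 1 + 2 * i ≤ g (r + 1) + ((n : ℤ) + 1 - (r + 1)) := by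
    have := hkey2.2
    push_cast at this ⊢
    omega
  rw [h2] at h4
  omega
end

section
/- Let ([i_1,j_1],[i_2,j_2]) ∈ 𝕀_n^2 with i_1 + j_1 > i_2 + j_2. Then [i_1,j_1] ∈ 𝓒_{i_2,j_2}^− if and only if the pair ([i_1,j_1],[i_2,j_2]) is connected. -/
open scoped Classical

/-- Explicit path used in the converse direction. -/
def gfun (i₁ j₁ i₂ j₂ : ℤ) (s : ℕ) : ℤ :=
  if (s : ℤ) ≤ j₂ - i₁ then 2 * j₂ - s
  else if (s : ℤ) ≤ j₁ - i₁ then 2 * i₁ + s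
  else if (s : ℤ) ≤ j₁ - i₂ then 2 * j₁ - s
  else (s : ℤ) + 2 * i₂

/-- Monotonicity along a ±1-step path: `g t - t` decreases and `g s + s` increases. -/
lemma path_mono (n : ℕ) (g : ℕ → ℤ)
    (hg : ∀ r : ℕ, r ≤ n → g (r + 1) - g r = 1 ∨ g (r + 1) - g r = -1) :
    ∀ t, t ≤ n + 1 → ∀ s, s ≤ t → g t - t ≤ g s - s ∧ g s + s ≤ g t + t := by
  intro t
  induction t with
  | zero => intro _ s hs; interval_cases s; simp
  | succ t ih =>
    intro ht s hs
    rcases Nat.eq_or_lt_of_le hs with h | h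
    · subst h; exact ⟨le_refl _, le_refl _⟩
    · have hst : s ≤ t := by omega
      have := ih (by omega) s hst
      have hstep := hg t (by omega)
      push_cast
      omega

/-- for `[i₁,j₁],[i₂,j₂] ∈ 𝕀ₙ` with `i₁ + j₁ > i₂ + j₂`, one has
`[i₁,j₁] ∈ 𝓒_{i₂,j₂}⁻` if and only if the pair `([i₁,j₁],[i₂,j₂])` is connected. -/
theorem stmt_14 (n : ℕ) (i₁ j₁ i₂ j₂ : ℤ)
    (h1 : memI n (i₁, j₁)) (h2 : memI n (i₂, j₂)) (hgt : i₂ + j₂ < i₁ + j₁) :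
    (∃ g : ℕ → ℤ, Pset n i₂ j₂ g ∧ ∃ r : ℕ, 1 ≤ r ∧ r ≤ n ∧
        g (r - 1) = g r - 1 ∧ g (r + 1) = g r - 1 ∧
        2 * i₁ = g r - (r : ℤ) ∧ 2 * j₁ = g r + (r : ℤ)) ↔
      Conn n (i₁, j₁) (i₂, j₂) := by
  constructor
  · rintro ⟨g, ⟨hg0, hgstep, hgN⟩, r, hr1, hrn, hprev, hnext, hi, hj⟩
    have key := path_mono n g hgstep
    have A1 := (key (n + 1) le_rfl (r + 1) (by omega)).1
    have A2 := (key r (by omega) 0 (by omega)).1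
    have B1 := (key (r - 1) (by omega) 0 (by omega)).2
    have B2 := (key (n + 1) le_rfl r (by omega)).2
    have hc : ((r - 1 : ℕ) : ℤ) = (r : ℤ) - 1 := by omega
    rw [hprev, hc] at B1
    rw [hnext] at A1
    left
    push_cast at A1 B2 hgN ⊢
    obtain ⟨h2a, h2b⟩ := h2
    simp only at h2a h2b ⊢
    refine ⟨by omega, by omega, by omega, by omega, by omega⟩
  · intro hconn
    rcases hconn with ⟨h₁, h₂, h₃, h₄, h₅⟩ | ⟨h₁, h₂, h₃, h₄, h₅⟩
    · simp only at h₁ h₂ h₃ h₄ h₅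
      refine ⟨gfun i₁ j₁ i₂ j₂, ⟨?_, ?_, ?_⟩, (j₁ - i₁).toNat, ?_, ?_, ?_, ?_, ?_, ?_⟩
      · unfold gfun; split_ifs <;> omega
      · intro s hs; unfold gfun; split_ifs <;> omega
      · unfold gfun; split_ifs <;> omega
      · omega
      · omega
      · unfold gfun; split_ifs <;> omega
      · unfold gfun; split_ifs <;> omega
      · unfold gfun; split_ifs <;> omega
      · unfold gfun; split_ifs <;> omega
    · simp only at h₁ h₂ h₃
      omega
end
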